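/- arXiv:math/0204315 — 4 statements merged into one kernel-verified Lean document; each statement's English description precedes it below -/
import Mathlib

section
/- Let V: ℤ_+^d → T_d be an admissible law of reinforcement with associated moment candidate sequence v: ℤ_+^d → (0,1]. Then for all multi-indices h, k ∈ ℤ_+^d, the sign-alternating iterated difference (-1)^{h_1+...+h_d} Δ^h(v)(k) is nonnegative; i.e., v is completely monotone in the sense of Hildebrandt–Schoenberg. -/
open Finset

/-- Bump a multi-index by one in direction `j`. -/
def bump (d : ℕ) (j : Fin d) (k : Fin d → ℕ) : Fin d → ℕ :=
  fun j' => k j' + if j' = j then 1 else 0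

lemma bump_comm (d : ℕ) (i j : Fin d) (k : Fin d → ℕ) :
    bump d i (bump d j k) = bump d j (bump d i k) := by
  funext j'
  simp only [bump]
  exact Nat.add_right_comm _ _ _

/-- Elementary forward difference in direction `i`. -/
def deltaE (d : ℕ) (i : Fin d) (u : (Fin d → ℕ) → ℝ) : (Fin d → ℕ) → ℝ :=
  fun k => u (fun j => k j + if j = i then 1 else 0) - u k

lemma deltaE_apply (d : ℕ) (i : Fin d) (u : (Fin d → ℕ) → ℝ) (k : Fin d → ℕ) :
    deltaE d i u k = u (bump d i k) - u k := rfl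

/-- Iterated difference `Δ^h`, applying `deltaE i` exactly `h i` times for each `i`. -/
def deltaMulti (d : ℕ) (h : Fin d → ℕ) (u : (Fin d → ℕ) → ℝ) : (Fin d → ℕ) → ℝ :=
  (List.finRange d).foldr (fun i acc => (deltaE d i)^[h i] acc) u

lemma deltaE_comm (d : ℕ) (i j : Fin d) :
    Function.Commute (deltaE d i) (deltaE d j) := by
  intro u
  funext k
  simp only [deltaE_apply]
  rw [bump_comm d j i k]
  ring

lemma deltaE_sh (d : ℕ) (i j : Fin d) (u : (Fin d → ℕ) → ℝ) :
    deltaE d i (fun k => u (bump d j k)) = fun k => deltaE d i u (bump d j k) := by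
  funext k
  simp only [deltaE_apply]
  rw [bump_comm d j i k]

lemma iter_sh (d : ℕ) (i j : Fin d) (n : ℕ) (u : (Fin d → ℕ) → ℝ) :
    (deltaE d i)^[n] (fun k => u (bump d j k)) = fun k => (deltaE d i)^[n] u (bump d j k) := by
  induction n generalizing u with
  | zero => simp
  | succ n ihn =>
      rw [Function.iterate_succ_apply, deltaE_sh, ihn]
      simp only [Function.iterate_succ_apply]

lemma foldr_sh (d : ℕ) (j : Fin d) (h : Fin d → ℕ) (l : List (Fin d)) (u : (Fin d → ℕ) → ℝ) :
    l.foldr (fun i acc => (deltaE d i)^[h i] acc) (fun k => u (bump d j k))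
      = fun k => l.foldr (fun i acc => (deltaE d i)^[h i] acc) u (bump d j k) := by
  induction l with
  | nil => rfl
  | cons a t ih =>
      simp only [List.foldr_cons]
      rw [ih, iter_sh]

lemma deltaMulti_sh (d : ℕ) (h : Fin d → ℕ) (j : Fin d) (u : (Fin d → ℕ) → ℝ) :
    deltaMulti d h (fun k => u (bump d j k)) = fun k => deltaMulti d h u (bump d j k) :=
  foldr_sh d j h _ u

lemma deltaE_negsum {ι : Type*} (d : ℕ) (i : Fin d) (S : Finset ι)
    (w : ι → (Fin d → ℕ) → ℝ) :
    deltaE d i (fun k => -∑ j ∈ S, w j k) = fun k => -∑ j ∈ S, deltaE d i (w j) k := by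
  funext k
  simp only [deltaE_apply]
  rw [Finset.sum_sub_distrib]
  ring

lemma iter_negsum {ι : Type*} (d : ℕ) (i : Fin d) (n : ℕ) (S : Finset ι)
    (w : ι → (Fin d → ℕ) → ℝ) :
    (deltaE d i)^[n] (fun k => -∑ j ∈ S, w j k)
      = fun k => -∑ j ∈ S, (deltaE d i)^[n] (w j) k := by
  induction n generalizing w with
  | zero => simp
  | succ n ihn =>
      rw [Function.iterate_succ_apply, deltaE_negsum, ihn]
      simp only [Function.iterate_succ_apply]

lemma foldr_negsum {ι : Type*} (d : ℕ) (h : Fin d → ℕ) (S : Finset ι)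
    (l : List (Fin d)) (w : ι → (Fin d → ℕ) → ℝ) :
    l.foldr (fun i acc => (deltaE d i)^[h i] acc) (fun k => -∑ j ∈ S, w j k)
      = fun k => -∑ j ∈ S, l.foldr (fun i acc => (deltaE d i)^[h i] acc) (w j) k := by
  induction l with
  | nil => rfl
  | cons a t ih =>
      simp only [List.foldr_cons]
      rw [ih, iter_negsum]

lemma deltaMulti_negsum {ι : Type*} (d : ℕ) (h : Fin d → ℕ) (S : Finset ι)
    (w : ι → (Fin d → ℕ) → ℝ) :
    deltaMulti d h (fun k => -∑ j ∈ S, w j k)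
      = fun k => -∑ j ∈ S, deltaMulti d h (w j) k :=
  foldr_negsum d h S _ w

lemma foldr_congr' (d : ℕ) (l : List (Fin d)) (h1 h2 : Fin d → ℕ)
    (hag : ∀ j ∈ l, h1 j = h2 j) (u : (Fin d → ℕ) → ℝ) :
    l.foldr (fun j acc => (deltaE d j)^[h1 j] acc) u
      = l.foldr (fun j acc => (deltaE d j)^[h2 j] acc) u := by
  induction l with
  | nil => rfl
  | cons a t ih =>
      simp only [List.foldr_cons]
      rw [hag a (by simp), ih (fun j hj => hag j (List.mem_cons_of_mem a hj))]

lemma foldr_comm (d : ℕ) (i : Fin d) (h : Fin d → ℕ) (l : List (Fin d))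
    (u : (Fin d → ℕ) → ℝ) :
    deltaE d i (l.foldr (fun j acc => (deltaE d j)^[h j] acc) u)
      = l.foldr (fun j acc => (deltaE d j)^[h j] acc) (deltaE d i u) := by
  induction l with
  | nil => rfl
  | cons a t ih =>
      simp only [List.foldr_cons]
      rw [((deltaE_comm d i a).iterate_right (h a)) _, ih]

lemma foldr_pull (d : ℕ) (i : Fin d) (l : List (Fin d)) (hn : l.Nodup) (hil : i ∈ l)
    (h : Fin d → ℕ) (u : (Fin d → ℕ) → ℝ) :
    l.foldr (fun j acc => (deltaE d j)^[Function.update h i (h i + 1) j] acc) u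
      = l.foldr (fun j acc => (deltaE d j)^[h j] acc) (deltaE d i u) := by
  induction l with
  | nil => simp at hil
  | cons a t ih =>
      rcases List.mem_cons.mp hil with rfl | hit
      · have hnotin : i ∉ t := (List.nodup_cons.mp hn).1
        simp only [List.foldr_cons, Function.update_self]
        rw [foldr_congr' d t (Function.update h i (h i + 1)) h
            (fun j hj => Function.update_of_ne (by rintro rfl; exact hnotin hj) _ _)]
        rw [← foldr_comm]
        exact Function.iterate_succ_apply (deltaE d i) (h i) _
      · have hai : a ≠ i := by rintro rfl; exact (List.nodup_cons.mp hn).1 hit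
        simp only [List.foldr_cons]
        rw [Function.update_of_ne hai, ih (List.nodup_cons.mp hn).2 hit]

lemma deltaMulti_pull (d : ℕ) (h : Fin d → ℕ) (i : Fin d) (u : (Fin d → ℕ) → ℝ) :
    deltaMulti d (Function.update h i (h i + 1)) u = deltaMulti d h (deltaE d i u) :=
  foldr_pull d i _ (List.nodup_finRange d) (List.mem_finRange i) h u

lemma deltaMulti_zero (d : ℕ) (h : Fin d → ℕ) (hz : ∀ i, h i = 0)
    (u : (Fin d → ℕ) → ℝ) : deltaMulti d h u = u := by
  have key : ∀ l : List (Fin d),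
      l.foldr (fun i acc => (deltaE d i)^[h i] acc) u = u := by
    intro l
    induction l with
    | nil => rfl
    | cons a t ih => simp only [List.foldr_cons, hz a, Function.iterate_zero, id, ih]
  exact key _

lemma word_exists (d : ℕ) (hd : 0 < d) :
    ∀ (N : ℕ) (k : Fin d → ℕ), ∑ j, k j = N →
      ∃ s : ℕ → Fin d, ∀ i, ((range N).filter (fun l => s l = i)).card = k i := by
  intro N
  induction N with
  | zero =>
      intro k hk
      refine ⟨fun _ => ⟨0, hd⟩, fun i => ?_⟩
      have h0 : k i = 0 := by
        have := Finset.sum_eq_zero_iff.mp hk i (mem_univ i)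
        exact this
      simp [h0]
  | succ N ih =>
      intro k hk
      have hex : ∃ i, k i ≠ 0 := by
        by_contra hc
        push_neg at hc
        simp [hc] at hk
      obtain ⟨i, hi⟩ := hex
      have hsum' : ∑ j, Function.update k i (k i - 1) j = N := by
        rw [Finset.sum_update_of_mem (mem_univ i)]
        have h2 : k i + ∑ j ∈ univ \ {i}, k j = ∑ j, k j := by
          rw [Finset.sdiff_singleton_eq_erase]
          exact Finset.add_sum_erase _ _ (mem_univ i)
        omega
      obtain ⟨s, hs⟩ := ih _ hsum'
      refine ⟨fun m => if m < N then s m else i, fun j => ?_⟩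
      rw [Finset.range_add_one, Finset.filter_insert]
      have hfil : (range N).filter (fun l => (if l < N then s l else i) = j)
          = (range N).filter (fun l => s l = j) := by
        apply Finset.filter_congr
        intro l hl
        simp [Finset.mem_range.mp hl]
      have hcond : (if N < N then s N else i) = i := if_neg (lt_irrefl N)
      simp only [hcond]
      by_cases hji : i = j
      · subst hji
        rw [if_pos rfl, Finset.card_insert_of_notMem (by simp), hfil, hs]
        simp [Function.update_self]
        omega
      · rw [if_neg hji, hfil, hs]
        simp [Function.update_of_ne (fun hh => hji hh.symm)]

lemma v_step (d : ℕ) (hd : 0 < d) (V : Fin d → (Fin d → ℕ) → ℝ)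
    (v : (Fin d → ℕ) → ℝ)
    (hv : ∀ (n : ℕ) (s : ℕ → Fin d),
      v (fun i => ((range n).filter (fun l => s l = i)).card) =
      ∏ m ∈ range n, V (s m) (fun i => ((range m).filter (fun l => s l = i)).card)) :
    ∀ (k : Fin d → ℕ) (i : Fin d), v (bump d i k) = V i k * v k := by
  intro k i
  obtain ⟨s, hs⟩ := word_exists d hd (∑ j, k j) k rfl
  set n := ∑ j, k j with hn
  set s' : ℕ → Fin d := fun m => if m < n then s m else i with hs'def
  have hpre : ∀ m, m ≤ n → ∀ j,
      ((range m).filter (fun l => s' l = j)) = ((range m).filter (fun l => s l = j)) := by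
    intro m hm j
    apply Finset.filter_congr
    intro l hl
    have hlm := Finset.mem_range.mp hl
    simp [hs'def, lt_of_lt_of_le hlm hm]
  have hocc : (fun j => ((range n).filter (fun l => s' l = j)).card) = k := by
    funext j
    rw [hpre n le_rfl]
    exact hs j
  have h1 := hv n s'
  have h2 := hv (n + 1) s'
  rw [hocc] at h1
  rw [Finset.prod_range_succ, ← h1, hocc] at h2
  have hsn : s' n = i := by simp [hs'def]
  rw [hsn] at h2
  have hfin : (fun j => ((range (n + 1)).filter (fun l => s' l = j)).card) = bump d i k := by
    funext j
    rw [Finset.range_add_one, Finset.filter_insert]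
    simp only [hsn]
    by_cases hji : i = j
    · subst hji
      rw [if_pos rfl, Finset.card_insert_of_notMem (by simp), hpre n le_rfl, hs]
      simp [bump]
    · rw [if_neg hji, hpre n le_rfl, hs]
      simp [bump, Ne.symm hji]
  rw [hfin] at h2
  rw [h2]
  ring

lemma v_pos (d : ℕ) (hd : 0 < d) (V : Fin d → (Fin d → ℕ) → ℝ)
    (hVrange : ∀ p, (∀ i, 0 < V i p ∧ V i p ≤ 1) ∧ ∑ i, V i p = 1)
    (v : (Fin d → ℕ) → ℝ)
    (hv : ∀ (n : ℕ) (s : ℕ → Fin d),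
      v (fun i => ((range n).filter (fun l => s l = i)).card) =
      ∏ m ∈ range n, V (s m) (fun i => ((range m).filter (fun l => s l = i)).card)) :
    ∀ k, 0 < v k := by
  suffices H : ∀ (N : ℕ) (k : Fin d → ℕ), ∑ j, k j = N → 0 < v k by
    intro k; exact H _ k rfl
  intro N
  induction N with
  | zero =>
      intro k hk
      have hk0 : ∀ i, k i = 0 := fun i => Finset.sum_eq_zero_iff.mp hk i (mem_univ i)
      have h1 := hv 0 (fun _ => ⟨0, hd⟩)
      have hkk : (fun i => ((range 0).filter
          (fun l => (fun _ : ℕ => (⟨0, hd⟩ : Fin d)) l = i)).card) = k := by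
        funext i; simp [hk0 i]
      rw [hkk] at h1
      simp at h1
      rw [h1]
      norm_num
  | succ N ih =>
      intro k hk
      have hex : ∃ i, k i ≠ 0 := by
        by_contra hc
        push_neg at hc
        simp [hc] at hk
      obtain ⟨i, hi⟩ := hex
      have hsum' : ∑ j, Function.update k i (k i - 1) j = N := by
        rw [Finset.sum_update_of_mem (mem_univ i)]
        have h2 : k i + ∑ j ∈ univ \ {i}, k j = ∑ j, k j := by
          rw [Finset.sdiff_singleton_eq_erase]
          exact Finset.add_sum_erase _ _ (mem_univ i)
        omega
      have hb : bump d i (Function.update k i (k i - 1)) = k := by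
        funext j
        by_cases hji : j = i
        · subst hji; simp [bump, Function.update_self]; omega
        · simp [bump, hji, Function.update_of_ne hji]
      have hvk := v_step d hd V v hv (Function.update k i (k i - 1)) i
      rw [hb] at hvk
      rw [hvk]
      exact mul_pos ((hVrange _).1 i).1 (ih _ hsum')

/-- For an admissible law of reinforcement `V` with moment candidate
sequence `v`, the sequence `v` is completely monotone:
`(-1)^{h₁+⋯+h_d} Δ^h v (k) ≥ 0` for all multi-indices `h, k`. -/
theorem stmt_4 (d : ℕ) (V : Fin d → (Fin d → ℕ) → ℝ)
    (hVrange : ∀ p, (∀ i, 0 < V i p ∧ V i p ≤ 1) ∧ ∑ i, V i p = 1)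
    (hadm : ∀ (p : Fin d → ℕ) (i j : Fin d),
      V i p * V j (fun k => p k + if k = i then 1 else 0) =
      V j p * V i (fun k => p k + if k = j then 1 else 0))
    (v : (Fin d → ℕ) → ℝ)
    (hv : ∀ (n : ℕ) (s : ℕ → Fin d),
      v (fun i => ((range n).filter (fun l => s l = i)).card) =
      ∏ m ∈ range n, V (s m) (fun i => ((range m).filter (fun l => s l = i)).card)) :
    ∀ h k : Fin d → ℕ, 0 ≤ (-1 : ℝ) ^ (∑ i, h i) * deltaMulti d h v k := by
  have hd : 0 < d := by
    by_contra hdn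
    have hd0 : d = 0 := by omega
    have hone := (hVrange (fun _ => 0)).2
    subst hd0
    simp at hone
  have hstep := v_step d hd V v hv
  have hpos := v_pos d hd V hVrange v hv
  have hdE : ∀ i, deltaE d i v = fun k => -∑ j ∈ univ.erase i, v (bump d j k) := by
    intro i
    funext k
    have h1 : ∀ j, v (bump d j k) = V j k * v k := fun j => hstep k j
    rw [deltaE_apply, h1 i]
    rw [Finset.sum_congr rfl (fun j _ => h1 j), ← Finset.sum_mul]
    rw [Finset.sum_erase_eq_sub (mem_univ i), (hVrange k).2]
    ring
  suffices H : ∀ (N : ℕ) (h : Fin d → ℕ), ∑ i, h i = N →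
      ∀ k, 0 ≤ (-1 : ℝ) ^ N * deltaMulti d h v k by
    intro h k; exact H _ h rfl k
  intro N
  induction N with
  | zero =>
      intro h hh k
      have hz : ∀ i, h i = 0 := fun i => Finset.sum_eq_zero_iff.mp hh i (mem_univ i)
      rw [deltaMulti_zero d h hz]
      simpa using (hpos k).le
  | succ N ih =>
      intro h hh k
      have hex : ∃ i, h i ≠ 0 := by
        by_contra hc
        push_neg at hc
        simp [hc] at hh
      obtain ⟨i, hi⟩ := hex
      set h' := Function.update h i (h i - 1) with hh'
      have hupd : Function.update h' i (h' i + 1) = h := by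
        funext j
        by_cases hji : j = i
        · subst hji; simp [hh', Function.update_self]; omega
        · simp [hh', Function.update_of_ne hji]
      have hsum' : ∑ j, h' j = N := by
        rw [hh', Finset.sum_update_of_mem (mem_univ i)]
        have h2 : h i + ∑ j ∈ univ \ {i}, h j = ∑ j, h j := by
          rw [Finset.sdiff_singleton_eq_erase]
          exact Finset.add_sum_erase _ _ (mem_univ i)
        omega
      have e1 : deltaMulti d h v = deltaMulti d h' (deltaE d i v) := by
        conv_lhs => rw [← hupd]
        rw [deltaMulti_pull]
      rw [e1, hdE i, deltaMulti_negsum d h' (univ.erase i) (fun j k' => v (bump d j k'))]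
      have e2 : ∀ j, deltaMulti d h' (fun k' => v (bump d j k'))
          = fun k' => deltaMulti d h' v (bump d j k') := fun j => deltaMulti_sh d h' j v
      have e3 : (-1 : ℝ) ^ (N + 1) *
          (-∑ j ∈ univ.erase i, deltaMulti d h' (fun k' => v (bump d j k')) k)
          = ∑ j ∈ univ.erase i, (-1 : ℝ) ^ N * deltaMulti d h' v (bump d j k) := by
        rw [Finset.sum_congr rfl (fun j _ => by rw [e2 j])]
        rw [← Finset.mul_sum, pow_succ]
        ring
      rw [e3]
      exact Finset.sum_nonneg fun j _ => ih h' hsum' (bump d j k)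
end

section
/- Let V: ℤ_+^d → T_d be an admissible law of reinforcement and v its moment candidate sequence. Then for every n ≥ 0, Σ_{k_1+...+k_d = n} (n!/(k_1!...k_d!)) v_{k_1,...,k_d} = 1. -/
/-!
Appending the letter `i` to a word with occupation vector `k` multiplies its weight by `V i k`,
and these factors sum to `1`, so `v k = ∑ i, v (k + eᵢ)`. Identify `k` with the monomial `X^k` of
the monoid algebra `R[ι → ℕ]`: the linear functional `L : X^k ↦ v k` is then invariant under
multiplication by `P = ∑ i, Xᵢ`, whence `L (P ^ n) = L 1 = v 0 = 1`. Expanding `P ^ n` by the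
multinomial theorem gives the claimed sum.
-/

open Finset AddMonoidAlgebra

theorem Finset.filter_piFinset_range_sum_eq_piAntidiag {ι : Type*} [Fintype ι] [DecidableEq ι]
    (n : ℕ) :
    {k ∈ Fintype.piFinset fun _ : ι => range (n + 1) | ∑ i, k i = n} = piAntidiag univ n := by
  ext k
  simp only [mem_filter, Fintype.mem_piFinset, mem_range, mem_piAntidiag, mem_univ,
    implies_true, and_true, and_iff_right_iff_imp]
  rintro rfl i
  exact Nat.lt_succ_of_le (single_le_sum (fun _ _ => Nat.zero_le _) (mem_univ i))

theorem sum_piAntidiag_multinomial_mul_of_harmonic {ι R : Type*} [Fintype ι] [DecidableEq ι]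
    [CommSemiring R] (f : (ι → ℕ) → R) (hf : ∀ k, ∑ i, f (k + Pi.single i 1) = f k)
    (n : ℕ) :
    ∑ k ∈ piAntidiag univ n, (Nat.multinomial univ k : R) * f k = f 0 := by
  let L : R[ι → ℕ] →+ R :=
    (Finsupp.liftAddHom fun k => AddMonoidHom.mulRight (f k)).comp
      (coeffAddEquiv (R := R) (M := ι → ℕ)).toAddMonoidHom
  have L_single (k : ι → ℕ) (c : R) : L (single k c) = c * f k := by
    simp [L, coeffAddEquiv]
  let P : R[ι → ℕ] := ∑ i, single (Pi.single i 1) 1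
  have L_mul_P (x : R[ι → ℕ]) : L (x * P) = L x := by
    induction x using AddMonoidAlgebra.induction_linear with
    | zero => simp
    | add x y hx hy => rw [add_mul, map_add, map_add, hx, hy]
    | single k c =>
      rw [mul_sum, map_sum]
      simp only [single_mul_single, mul_one, L_single]
      rw [← mul_sum, hf]
  have L_P_pow (m : ℕ) : L (P ^ m) = f 0 := by
    induction m with
    | zero => rw [pow_zero, one_def, L_single, one_mul]
    | succ m ih => rw [pow_succ, L_mul_P, ih]
  have P_pow : P ^ n = ∑ k ∈ piAntidiag univ n, single k (Nat.multinomial univ k : R) := by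
    rw [sum_pow_eq_sum_piAntidiag]
    refine sum_congr rfl fun k _ => ?_
    simp only [single_pow, one_pow, prod_single, prod_const_one, ← Pi.single_smul, smul_eq_mul,
      mul_one, univ_sum_single, natCast_def, single_mul_single, zero_add]
  rw [← L_P_pow n, P_pow, map_sum]
  simp only [L_single]

section Occupation

variable {ι : Type*} [DecidableEq ι]

def occupation (s : ℕ → ι) (n : ℕ) : ι → ℕ :=
  fun i => #{l ∈ range n | s l = i}

theorem occupation_zero (s : ℕ → ι) : occupation s 0 = 0 := by
  funext i
  simp [occupation]

theorem occupation_succ (s : ℕ → ι) (n : ℕ) :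
    occupation s (n + 1) = occupation s n + Pi.single (s n) 1 := by
  funext i
  by_cases h : s n = i
  · subst h
    simp [occupation, range_add_one, filter_insert]
  · simp [occupation, range_add_one, filter_insert, h, Ne.symm h]

theorem occupation_update_self (s : ℕ → ι) (n : ℕ) (i : ι) :
    occupation (Function.update s n i) n = occupation s n := by
  funext j
  refine congrArg card (filter_congr fun l hl => ?_)
  rw [Function.update_of_ne (mem_range.mp hl).ne]

theorem exists_occupation_eq [Finite ι] [Nonempty ι] (k : ι → ℕ) :
    ∃ s n, occupation s n = k := by
  suffices h : ∀ m k, (∃ s n, occupation s n = k) → ∃ s n, occupation s n = k + m by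
    simpa using h k 0 ⟨Classical.arbitrary _, 0, occupation_zero _⟩
  intro m
  induction m using Pi.single_induction with
  | zero => simp
  | add f g hf hg => exact fun k hk => add_assoc k f g ▸ hg _ (hf k hk)
  | single i m =>
    induction m with
    | zero => simp
    | succ m ih =>
      intro k hk
      obtain ⟨s, n, hs⟩ := ih k hk
      refine ⟨Function.update s n i, n + 1, ?_⟩
      rw [occupation_succ, occupation_update_self, Function.update_self, hs, add_assoc,
        ← Pi.single_add]

variable {R : Type*} [CommMonoid R] {V : ι → (ι → ℕ) → R} {v : (ι → ℕ) → R}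

theorem apply_zero_of_forall_word [Nonempty ι]
    (hv : ∀ n s, v (occupation s n) = ∏ m ∈ range n, V (s m) (occupation s m)) : v 0 = 1 := by
  simpa [occupation_zero] using hv 0 fun _ => Classical.arbitrary ι

theorem apply_add_single_of_forall_word [Finite ι] [Nonempty ι]
    (hv : ∀ n s, v (occupation s n) = ∏ m ∈ range n, V (s m) (occupation s m))
    (k : ι → ℕ) (i : ι) : v (k + Pi.single i 1) = v k * V i k := by
  obtain ⟨s, n, rfl⟩ := exists_occupation_eq k
  have h := hv (n + 1) (Function.update s n i)
  rwa [prod_range_succ, ← hv, occupation_succ, occupation_update_self, Function.update_self] at h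

end Occupation

theorem stmt_6_general (d : ℕ) (V : Fin d → (Fin d → ℕ) → ℝ)
    (hVrange : ∀ p, (∀ i, 0 < V i p ∧ V i p ≤ 1) ∧ ∑ i, V i p = 1)
    (v : (Fin d → ℕ) → ℝ)
    (hv : ∀ (n : ℕ) (s : ℕ → Fin d),
      v (fun i => ((range n).filter (fun l => s l = i)).card) =
      ∏ m ∈ range n, V (s m) (fun i => ((range m).filter (fun l => s l = i)).card)) :
    ∀ n : ℕ,
      ∑ k ∈ (Fintype.piFinset fun _ : Fin d => range (n + 1)).filter
          (fun k => ∑ i, k i = n),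
        (Nat.multinomial univ k : ℝ) * v k = 1 := by
  intro n
  have : Nonempty (Fin d) := by
    by_contra h
    simpa [not_nonempty_iff.mp h] using (hVrange 0).2
  have hv : ∀ n s, v (occupation s n) = ∏ m ∈ range n, V (s m) (occupation s m) := hv
  have harmonic (k : Fin d → ℕ) : ∑ i, v (k + Pi.single i 1) = v k := by
    simp only [apply_add_single_of_forall_word hv, ← mul_sum, (hVrange k).2, mul_one]
  rw [filter_piFinset_range_sum_eq_piAntidiag,
    sum_piAntidiag_multinomial_mul_of_harmonic v harmonic, apply_zero_of_forall_word hv]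

/-- For an admissible law of reinforcement `V` with moment candidate
sequence `v`, for every `n`, `∑_{k₁+⋯+k_d = n} (n!/(k₁!⋯k_d!)) v_k = 1`. -/
theorem stmt_6 (d : ℕ) (V : Fin d → (Fin d → ℕ) → ℝ)
    (hVrange : ∀ p, (∀ i, 0 < V i p ∧ V i p ≤ 1) ∧ ∑ i, V i p = 1)
    (hadm : ∀ (p : Fin d → ℕ) (i j : Fin d),
      V i p * V j (fun k => p k + if k = i then 1 else 0) =
      V j p * V i (fun k => p k + if k = j then 1 else 0))
    (v : (Fin d → ℕ) → ℝ)
    (hv : ∀ (n : ℕ) (s : ℕ → Fin d),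
      v (fun i => ((range n).filter (fun l => s l = i)).card) =
      ∏ m ∈ range n, V (s m) (fun i => ((range m).filter (fun l => s l = i)).card)) :
    ∀ n : ℕ,
      ∑ k ∈ (Fintype.piFinset fun _ : Fin d => range (n + 1)).filter
          (fun k => ∑ i, k i = n),
        (Nat.multinomial univ k : ℝ) * v k = 1 :=
  stmt_6_general d V hVrange v hv
end

section
/- Let α ∈ (0,∞)^d, let P(t) = Σ_{|k|=n} a_k t^k be a homogeneous polynomial of degree n with nonnegative coefficients, not all zero, and let μ be the probability measure on T_d with density proportional to (∏ t_i^{α_i−1}) P(t). Define Q(y) = Σ_{|k|=n} a_k ∏_i (y_i)_{k_i}, where (y)_k = y(y+1)...(y+k−1) is the rising factorial. Then for every p ∈ ℤ_+^d and i, the reinforcement law V_i(p) = E_μ[X_i X^p]/E_μ[X^p] equals ((α_i+p_i)/((Σ_j α_j+p_j)+n)) · Q(α_1+p_1,...,α_i+p_i+1,...,α_d+p_d)/Q(α_1+p_1,...,α_d+p_d). -/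
/-!
Multiplying the density `c (∏ tᵢ^{αᵢ-1}) P(t)` by a monomial `t^q` turns each term `a_k t^k` of
`P` into a Dirichlet kernel with parameters `α + q + k`, whose integral over the simplex is
`∏ Γ(αⱼ + qⱼ + kⱼ) / Γ(|α + q| + n)`. Factoring out `∏ Γ(αⱼ + qⱼ)` leaves the rising factorials,
so `E_μ[X^q] = c ∏ Γ(αⱼ + qⱼ) / Γ(|α + q| + n) · Q(α + q)`, and the reinforcement law is the
quotient of this for `q = p + eᵢ` and `q = p`, simplified by `Γ(x + 1) = x Γ(x)`.
The Dirichlet integral itself follows by induction on the dimension, integrating out the first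
coordinate with a Beta integral.
-/

open MeasureTheory Finset

lemma Real.Gamma_add_nat_eq_mul_prod {x : ℝ} (hx : 0 < x) (k : ℕ) :
    Real.Gamma (x + k) = Real.Gamma x * ∏ r ∈ range k, (x + r) := by
  induction k with
  | zero => simp
  | succ k ih =>
    rw [Nat.cast_succ, ← add_assoc, Real.Gamma_add_one (by positivity), ih, prod_range_succ]
    ring

lemma prod_Gamma_add_nat {ι : Type*} [Fintype ι] {y : ι → ℝ} (hy : ∀ j, 0 < y j) (k : ι → ℕ) :
    ∏ j, Real.Gamma (y j + k j) = (∏ j, Real.Gamma (y j)) * ∏ j, ∏ r ∈ range (k j), (y j + r) := by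
  rw [← prod_mul_distrib]
  exact prod_congr rfl fun j _ => Real.Gamma_add_nat_eq_mul_prod (hy j) (k j)

lemma prod_rpow_mul_prod_pow {ι : Type*} [Fintype ι] {t : ι → ℝ} (ht : ∀ j, 0 < t j)
    (β : ι → ℝ) (k : ι → ℕ) : (∏ j, t j ^ β j) * ∏ j, t j ^ k j = ∏ j, t j ^ (β j + k j) := by
  rw [← prod_mul_distrib]
  exact prod_congr rfl fun j _ => by rw [Real.rpow_add (ht j), Real.rpow_natCast]

@[to_additive]
lemma prod_apply_update_of_eq_mul {ι M : Type*} [Fintype ι] [DecidableEq ι] [CommMonoid M]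
    {N : Type*} (g : ι → N → M) (p : ι → N) (i : ι) {v : N} {u : M} (hu : g i v = u * g i (p i)) :
    ∏ j, g j (Function.update p i v j) = u * ∏ j, g j (p j) := by
  simp_rw [Function.apply_update g p i v, hu]
  rw [prod_update_of_mem (Finset.mem_univ i),
    prod_eq_mul_prod_sdiff_singleton_of_mem (Finset.mem_univ i), mul_assoc]

section Simplex

open Set

lemma intervalIntegral_rpow_mul_sub_rpow {a b s : ℝ} (ha : 0 < a) (hb : 0 < b) (hs : 0 < s) :
    ∫ x in (0)..s, x ^ (a - 1) * (s - x) ^ (b - 1) =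
      s ^ (a + b - 1) * (Real.Gamma a * Real.Gamma b / Real.Gamma (a + b)) := by
  have hcpow : EqOn (fun x : ℝ => (x : ℂ) ^ ((a : ℂ) - 1) * ((s : ℂ) - x) ^ ((b : ℂ) - 1))
      (fun x => ((x ^ (a - 1) * (s - x) ^ (b - 1) : ℝ) : ℂ)) (uIcc 0 s) := by
    intro x hx
    rw [uIcc_of_le hs.le] at hx
    dsimp only
    rw [Complex.ofReal_mul, Complex.ofReal_cpow hx.1, Complex.ofReal_cpow (sub_nonneg.2 hx.2)]
    push_cast
    rfl
  apply Complex.ofReal_injective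
  rw [← intervalIntegral.integral_ofReal, ← intervalIntegral.integral_congr hcpow,
    Complex.betaIntegral_scaled _ _ hs,
    Complex.betaIntegral_eq_Gamma_mul_div _ _ (by simpa using ha) (by simpa using hb)]
  push_cast
  rw [Complex.ofReal_cpow hs.le, ← Complex.Gamma_ofReal, ← Complex.Gamma_ofReal,
    ← Complex.Gamma_ofReal]
  push_cast
  rfl

lemma lintegral_Ioo_rpow_mul_sub_rpow {a b s : ℝ} (ha : 0 < a) (hb : 0 < b) (hs : 0 < s) :
    ∫⁻ x in Ioo 0 s, ENNReal.ofReal (x ^ (a - 1) * (s - x) ^ (b - 1)) =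
      ENNReal.ofReal (s ^ (a + b - 1) * (Real.Gamma a * Real.Gamma b / Real.Gamma (a + b))) := by
  have hpos : 0 < s ^ (a + b - 1) * (Real.Gamma a * Real.Gamma b / Real.Gamma (a + b)) := by
    have := Real.Gamma_pos_of_pos ha
    have := Real.Gamma_pos_of_pos hb
    have := Real.Gamma_pos_of_pos (add_pos ha hb)
    positivity
  rw [← intervalIntegral_rpow_mul_sub_rpow ha hb hs] at hpos ⊢
  have hint := (intervalIntegral.intervalIntegrable_of_integral_ne_zero hpos.ne').1
  rw [intervalIntegral.integral_of_le hs.le, ← setIntegral_congr_set Ioo_ae_eq_Ioc,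
    ofReal_integral_eq_lintegral_ofReal (hint.mono_set Ioo_subset_Ioc_self)]
  filter_upwards [ae_restrict_mem measurableSet_Ioo] with x hx
  have := Real.rpow_nonneg hx.1.le (a - 1)
  have := Real.rpow_nonneg (sub_nonneg.2 hx.2.le) (b - 1)
  positivity

def openSimplex (m : ℕ) (s : ℝ) : Set (Fin m → ℝ) := {y | (∀ i, 0 < y i) ∧ ∑ i, y i < s}

def simplexLift {m : ℕ} (s : ℝ) (y : Fin m → ℝ) : Fin (m + 1) → ℝ := Fin.snoc y (s - ∑ i, y i)

variable {m : ℕ}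

lemma measurableSet_openSimplex (s : ℝ) : MeasurableSet (openSimplex m s) := by
  have : openSimplex m s = (⋂ i, {y | 0 < y i}) ∩ {y | ∑ i, y i < s} := by
    ext y; simp [openSimplex]
  rw [this]
  exact (MeasurableSet.iInter fun i =>
    measurableSet_lt measurable_const (measurable_pi_apply i)).inter
      (measurableSet_lt (by fun_prop) measurable_const)

@[fun_prop]
lemma measurable_simplexLift (s : ℝ) : Measurable (simplexLift (m := m) s) :=
  (continuous_id.finSnoc (by fun_prop)).measurable

lemma simplexLift_cons (s x : ℝ) (w : Fin m → ℝ) :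
    simplexLift s (Fin.cons x w : Fin (m + 1) → ℝ) = Fin.cons x (simplexLift (s - x) w) := by
  rw [simplexLift, simplexLift, Fin.sum_cons, Fin.cons_snoc_eq_snoc_cons, sub_sub]

lemma simplexLift_pos {s : ℝ} {y : Fin m → ℝ} (hy : y ∈ openSimplex m s) (j : Fin (m + 1)) :
    0 < simplexLift s y j := by
  induction j using Fin.lastCases with
  | last => simpa [simplexLift] using hy.2
  | cast i => simpa [simplexLift] using hy.1 i

lemma cons_mem_openSimplex_iff {s x : ℝ} {w : Fin m → ℝ} :
    (Fin.cons x w : Fin (m + 1) → ℝ) ∈ openSimplex (m + 1) s ↔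
      x ∈ Ioo 0 s ∧ w ∈ openSimplex m (s - x) := by
  simp only [openSimplex, mem_ofPred_eq, Fin.forall_fin_succ, Fin.cons_zero, Fin.cons_succ,
    Fin.sum_cons, Set.mem_Ioo, lt_sub_iff_add_lt']
  constructor
  · rintro ⟨⟨hx, hw⟩, hsum⟩
    have : 0 ≤ ∑ i, w i := sum_nonneg fun i _ => (hw i).le
    exact ⟨⟨hx, by linarith⟩, hw, hsum⟩
  · rintro ⟨⟨hx, -⟩, hw, hsum⟩
    exact ⟨⟨hx, hw⟩, hsum⟩

lemma lintegral_fin_cons {f : (Fin (m + 1) → ℝ) → ENNReal} (hf : Measurable f) :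
    ∫⁻ y, f y = ∫⁻ x, ∫⁻ w, f (Fin.cons x w) := by
  have he := (volume_preserving_piFinSuccAbove (fun _ : Fin (m + 1) => ℝ) 0).symm
  rw [← he.lintegral_comp hf, Measure.volume_eq_prod]
  refine (lintegral_prod _ (hf.comp he.measurable).aemeasurable).trans ?_
  simp [MeasurableEquiv.piFinSuccAbove_symm_apply, Fin.insertNthEquiv, Fin.insertNth_zero']

lemma setLIntegral_openSimplex_succ (s : ℝ) {f : (Fin (m + 1) → ℝ) → ENNReal}
    (hf : Measurable f) :
    ∫⁻ y in openSimplex (m + 1) s, f y =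
      ∫⁻ x in Ioo 0 s, ∫⁻ w in openSimplex m (s - x), f (Fin.cons x w) := by
  rw [← lintegral_indicator (measurableSet_openSimplex _),
    lintegral_fin_cons (hf.indicator (measurableSet_openSimplex _)),
    ← lintegral_indicator measurableSet_Ioo]
  congr 1 with x
  classical
  by_cases hx : x ∈ Ioo 0 s
  · rw [indicator_of_mem hx, ← lintegral_indicator (measurableSet_openSimplex _)]
    congr 1 with w
    simp only [indicator_apply, cons_mem_openSimplex_iff, hx, true_and]
  · simp [cons_mem_openSimplex_iff, hx]

theorem lintegral_openSimplex_dirichlet (β : Fin (m + 1) → ℝ) (hβ : ∀ i, 0 < β i) {s : ℝ}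
    (hs : 0 < s) :
    ∫⁻ y in openSimplex m s, ENNReal.ofReal (∏ j, simplexLift s y j ^ (β j - 1)) =
      ENNReal.ofReal (s ^ (∑ j, β j - 1) * ((∏ j, Real.Gamma (β j)) / Real.Gamma (∑ j, β j))) := by
  induction m generalizing s with
  | zero =>
    have huniv : openSimplex 0 s = univ := by ext y; simp [openSimplex, hs]
    have hΓ := (Real.Gamma_pos_of_pos (hβ 0)).ne'
    simp [huniv, simplexLift, hΓ, Fin.snoc, volume_pi]
  | succ m ih =>
    have hσ : 0 < ∑ j, β (Fin.succ j) := sum_pos (fun j _ => hβ _) univ_nonempty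
    have inner : ∀ x ∈ Ioo 0 s,
        ∫⁻ w in openSimplex m (s - x),
          ENNReal.ofReal (∏ j, simplexLift s (Fin.cons x w) j ^ (β j - 1)) =
        ENNReal.ofReal (x ^ (β 0 - 1) * (s - x) ^ (∑ j, β (Fin.succ j) - 1)) *
          ENNReal.ofReal
            ((∏ j, Real.Gamma (β (Fin.succ j))) / Real.Gamma (∑ j, β (Fin.succ j))) := by
      intro x hx
      have hx₀ := Real.rpow_nonneg hx.1.le (β 0 - 1)
      have hsx := Real.rpow_nonneg (sub_pos.2 hx.2).le (∑ j, β (Fin.succ j) - 1)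
      simp_rw [simplexLift_cons, Fin.prod_univ_succ (n := m + 1), Fin.cons_zero, Fin.cons_succ,
        ENNReal.ofReal_mul hx₀]
      rw [lintegral_const_mul' _ _ ENNReal.ofReal_ne_top,
        ih (fun j => β j.succ) (fun j => hβ _) (sub_pos.2 hx.2), ← ENNReal.ofReal_mul hx₀,
        ← ENNReal.ofReal_mul hx₀, ← ENNReal.ofReal_mul (mul_nonneg hx₀ hsx), mul_assoc]
    have hβ₀ := hβ 0
    rw [setLIntegral_openSimplex_succ s (by fun_prop),
      setLIntegral_congr_fun measurableSet_Ioo inner,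
      lintegral_mul_const' _ _ ENNReal.ofReal_ne_top, lintegral_Ioo_rpow_mul_sub_rpow hβ₀ hσ hs,
      ← ENNReal.ofReal_mul (by positivity)]
    congr 1
    rw [Fin.sum_univ_succ β, Fin.prod_univ_succ (fun j => Real.Gamma (β j))]
    field_simp

/-- The support condition is spelled out rather than written `y ∈ openSimplex m 1` so that the
measure `μ` of `stmt_12` unfolds to a `simplexMeasure` definitionally. -/
noncomputable def simplexMeasure (f : (Fin (m + 1) → ℝ) → ℝ) : Measure (Fin (m + 1) → ℝ) :=
  Measure.map (simplexLift 1) ((volume : Measure (Fin m → ℝ)).withDensity fun y =>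
    ENNReal.ofReal (if (∀ i, 0 < y i) ∧ ∑ i, y i < 1 then f (simplexLift 1 y) else 0))

lemma measurable_simplexMeasure_density {f : (Fin (m + 1) → ℝ) → ℝ} (hf : Measurable f) :
    Measurable fun y : Fin m → ℝ =>
      ENNReal.ofReal (if (∀ i, 0 < y i) ∧ ∑ i, y i < 1 then f (simplexLift 1 y) else 0) :=
  have hS : MeasurableSet {y : Fin m → ℝ | (∀ i, 0 < y i) ∧ ∑ i, y i < 1} :=
    measurableSet_openSimplex 1
  (Measurable.ite hS (hf.comp (measurable_simplexLift 1)) measurable_const).ennreal_ofReal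

lemma lintegral_simplexMeasure {f : (Fin (m + 1) → ℝ) → ℝ} (hf : Measurable f)
    {g : (Fin (m + 1) → ℝ) → ENNReal} (hg : Measurable g) :
    ∫⁻ x, g x ∂simplexMeasure f =
      ∫⁻ y in openSimplex m 1, ENNReal.ofReal (f (simplexLift 1 y)) * g (simplexLift 1 y) := by
  rw [simplexMeasure, lintegral_map hg (measurable_simplexLift 1)]
  refine (lintegral_withDensity_eq_lintegral_mul _ (measurable_simplexMeasure_density hf)
      (hg.comp (measurable_simplexLift 1))).trans ?_
  rw [← lintegral_indicator (measurableSet_openSimplex 1)]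
  congr 1 with y
  rw [Pi.mul_apply, Function.comp_apply]
  by_cases hy : (∀ i, 0 < y i) ∧ ∑ i, y i < 1
  · rw [if_pos hy, indicator_of_mem (s := openSimplex m 1) hy]
  · rw [if_neg hy, indicator_of_notMem (s := openSimplex m 1) hy, ENNReal.ofReal_zero, zero_mul]

lemma ae_simplexMeasure_pos {f : (Fin (m + 1) → ℝ) → ℝ} (hf : Measurable f) :
    ∀ᵐ x ∂simplexMeasure f, ∀ j, 0 < x j := by
  have hpos : MeasurableSet {x : Fin (m + 1) → ℝ | ∀ j, 0 < x j} := by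
    simp only [ofPred_forall]
    exact MeasurableSet.iInter fun j => measurableSet_lt measurable_const (measurable_pi_apply j)
  rw [simplexMeasure, ae_map_iff (measurable_simplexLift 1).aemeasurable hpos,
    ae_withDensity_iff (measurable_simplexMeasure_density hf)]
  filter_upwards with y hy
  by_cases hy' : (∀ i, 0 < y i) ∧ ∑ i, y i < 1
  · exact simplexLift_pos hy'
  · simp [hy'] at hy

end Simplex

section DirichletMixture

variable {ι : Type*} [Fintype ι] {α : ι → ℝ} {K : Finset (ι → ℕ)} {a : (ι → ℕ) → ℝ} {c : ℝ}

noncomputable def dirichletMixtureDensity (c : ℝ) (α : ι → ℝ) (K : Finset (ι → ℕ))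
    (a : (ι → ℕ) → ℝ) (t : ι → ℝ) : ℝ :=
  c * (∏ j, t j ^ (α j - 1)) * ∑ k ∈ K, a k * ∏ j, t j ^ k j

@[fun_prop]
lemma measurable_dirichletMixtureDensity : Measurable (dirichletMixtureDensity c α K a) := by
  unfold dirichletMixtureDensity
  fun_prop

lemma dirichletMixtureDensity_nonneg (hc : 0 ≤ c) (ha : ∀ k, 0 ≤ a k) {t : ι → ℝ}
    (ht : ∀ j, 0 ≤ t j) : 0 ≤ dirichletMixtureDensity c α K a t :=
  mul_nonneg (mul_nonneg hc (prod_nonneg fun j _ => Real.rpow_nonneg (ht j) _))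
    (sum_nonneg fun k _ => mul_nonneg (ha k) (prod_nonneg fun j _ => pow_nonneg (ht j) _))

lemma dirichletMixtureDensity_mul_prod_pow {t : ι → ℝ} (ht : ∀ j, 0 < t j) (q : ι → ℕ) :
    dirichletMixtureDensity c α K a t * ∏ j, t j ^ q j =
      ∑ k ∈ K, c * a k * ∏ j, t j ^ (α j + q j + k j - 1) := by
  rw [dirichletMixtureDensity, mul_sum, sum_mul]
  refine sum_congr rfl fun k _ => ?_
  calc c * (∏ j, t j ^ (α j - 1)) * (a k * ∏ j, t j ^ k j) * ∏ j, t j ^ q j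
      = c * a k * (((∏ j, t j ^ (α j - 1)) * ∏ j, t j ^ k j) * ∏ j, t j ^ q j) := by ring
    _ = c * a k * ∏ j, t j ^ (α j + q j + k j - 1) := by
      rw [prod_rpow_mul_prod_pow ht, prod_rpow_mul_prod_pow ht]
      exact congrArg _ (prod_congr rfl fun j _ => by ring_nf)

end DirichletMixture

section Moments

variable {m n : ℕ} {α : Fin (m + 1) → ℝ} {K : Finset (Fin (m + 1) → ℕ)}
  {a : (Fin (m + 1) → ℕ) → ℝ} {c : ℝ}

theorem lintegral_prod_pow_simplexMeasure (hα : ∀ j, 0 < α j) (hK : ∀ k ∈ K, ∑ j, k j = n)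
    (ha : ∀ k, 0 ≤ a k) (hc : 0 ≤ c) (q : Fin (m + 1) → ℕ) :
    ∫⁻ x, ENNReal.ofReal (∏ j, x j ^ q j) ∂simplexMeasure (dirichletMixtureDensity c α K a) =
      ENNReal.ofReal (c * (∏ j, Real.Gamma (α j + q j)) / Real.Gamma (∑ j, (α j + q j) + n) *
        ∑ k ∈ K, a k * ∏ j, ∏ r ∈ range (k j), (α j + q j + r)) := by
  have hαq : ∀ j, 0 < α j + q j := fun j => by have := hα j; positivity
  have hca : ∀ k, 0 ≤ c * a k := fun k => mul_nonneg hc (ha k)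
  have hterm : ∀ k ∈ K, ∫⁻ y in openSimplex m 1,
      ENNReal.ofReal (c * a k * ∏ j, simplexLift 1 y j ^ (α j + q j + k j - 1)) =
      ENNReal.ofReal (c * a k * ((∏ j, Real.Gamma (α j + q j + k j)) /
        Real.Gamma (∑ j, (α j + q j) + n))) := by
    intro k hk
    have hsum : ∑ j, (α j + q j + k j) = ∑ j, (α j + q j) + n := by
      rw [sum_add_distrib, ← Nat.cast_sum, hK k hk]
    simp_rw [ENNReal.ofReal_mul (hca k)]
    rw [lintegral_const_mul' _ _ ENNReal.ofReal_ne_top,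
      lintegral_openSimplex_dirichlet _ (fun j => by have := hαq j; positivity) one_pos,
      Real.one_rpow, one_mul, hsum]
  rw [lintegral_simplexMeasure (by fun_prop) (by fun_prop),
    setLIntegral_congr_fun (measurableSet_openSimplex 1) fun y hy => by
      have hpos := simplexLift_pos hy
      rw [← ENNReal.ofReal_mul (dirichletMixtureDensity_nonneg hc ha fun j => (hpos j).le),
        dirichletMixtureDensity_mul_prod_pow hpos, ENNReal.ofReal_sum_of_nonneg]
      exact fun k _ => mul_nonneg (hca k) (prod_nonneg fun j _ => Real.rpow_nonneg (hpos j).le _)]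
  rw [lintegral_finsetSum _ fun k _ => by fun_prop, sum_congr rfl hterm,
    ← ENNReal.ofReal_sum_of_nonneg]
  · congr 1
    simp_rw [prod_Gamma_add_nat hαq, mul_sum]
    exact sum_congr rfl fun k _ => by ring
  · refine fun k _ => mul_nonneg (hca k) (div_nonneg ?_ ?_)
    · exact prod_nonneg fun j _ => Real.Gamma_nonneg_of_nonneg (by have := hαq j; positivity)
    · exact Real.Gamma_nonneg_of_nonneg
        (add_nonneg (sum_nonneg fun j _ => (hαq j).le) n.cast_nonneg)

theorem integral_prod_pow_simplexMeasure (hα : ∀ j, 0 < α j) (hK : ∀ k ∈ K, ∑ j, k j = n)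
    (ha : ∀ k, 0 ≤ a k) (hc : 0 ≤ c) (q : Fin (m + 1) → ℕ) :
    ∫ x, ∏ j, x j ^ q j ∂simplexMeasure (dirichletMixtureDensity c α K a) =
      c * (∏ j, Real.Gamma (α j + q j)) / Real.Gamma (∑ j, (α j + q j) + n) *
        ∑ k ∈ K, a k * ∏ j, ∏ r ∈ range (k j), (α j + q j + r) := by
  have hαq : ∀ j, 0 < α j + q j := fun j => by have := hα j; positivity
  rw [integral_eq_lintegral_of_nonneg_ae ((ae_simplexMeasure_pos (by fun_prop)).mono fun x hx =>
      prod_nonneg fun j _ => pow_nonneg (hx j).le _)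
      (by fun_prop : Measurable fun x : Fin (m + 1) → ℝ => ∏ j, x j ^ q j).aestronglyMeasurable,
    lintegral_prod_pow_simplexMeasure hα hK ha hc, ENNReal.toReal_ofReal]
  have hΓ : 0 ≤ Real.Gamma (∑ j, (α j + q j) + n) :=
    Real.Gamma_nonneg_of_nonneg (add_nonneg (sum_nonneg fun j _ => (hαq j).le) n.cast_nonneg)
  refine mul_nonneg (div_nonneg (mul_nonneg hc (prod_nonneg fun j _ => ?_)) hΓ)
    (sum_nonneg fun k _ => mul_nonneg (ha k) (prod_nonneg fun j _ => prod_nonneg fun r _ => ?_))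
  · exact Real.Gamma_nonneg_of_nonneg (hαq j).le
  · have := hαq j
    positivity

theorem integral_mul_div_integral_simplexMeasure (hα : ∀ j, 0 < α j)
    (hK : ∀ k ∈ K, ∑ j, k j = n) (ha : ∀ k, 0 ≤ a k) (hc : 0 < c) (p : Fin (m + 1) → ℕ)
    (i : Fin (m + 1)) :
    (∫ x, x i * ∏ j, x j ^ p j ∂simplexMeasure (dirichletMixtureDensity c α K a)) /
        (∫ x, ∏ j, x j ^ p j ∂simplexMeasure (dirichletMixtureDensity c α K a)) =
      (α i + p i) / (∑ j, (α j + p j) + n) *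
        ((∑ k ∈ K, a k * ∏ j, ∏ r ∈ range (k j),
            (Function.update (fun j => α j + p j) i (α i + p i + 1) j + r)) /
          ∑ k ∈ K, a k * ∏ j, ∏ r ∈ range (k j), (α j + p j + r)) := by
  have hαp : ∀ j, 0 < α j + p j := fun j => by have := hα j; positivity
  have hS : 0 < ∑ j, (α j + p j) + n := by
    have := sum_pos (fun j _ => hαp j) univ_nonempty; positivity
  set q := Function.update p i (p i + 1) with hq
  have hx (x : Fin (m + 1) → ℝ) : x i * ∏ j, x j ^ p j = ∏ j, x j ^ q j :=
    (prod_apply_update_of_eq_mul (fun j k => x j ^ k) p i (pow_succ' _ _)).symm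
  have hΓ : ∏ j, Real.Gamma (α j + q j) = (α i + p i) * ∏ j, Real.Gamma (α j + p j) :=
    prod_apply_update_of_eq_mul (fun j (k : ℕ) => Real.Gamma (α j + k)) p i
      (by rw [Nat.cast_succ, ← add_assoc, Real.Gamma_add_one (hαp i).ne'])
  have hsum : ∑ j, (α j + (q j : ℝ)) = 1 + ∑ j, (α j + p j) :=
    sum_apply_update_of_eq_add (fun j (k : ℕ) => α j + (k : ℝ)) p i (by push_cast; ring)
  have hshift : (fun j => α j + (q j : ℝ)) =
      Function.update (fun j => α j + p j) i (α i + p i + 1) := by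
    ext j
    rcases eq_or_ne j i with rfl | hj
    · simp [hq, add_assoc]
    · simp [hq, hj]
  simp_rw [hx, integral_prod_pow_simplexMeasure hα hK ha hc.le, ← hshift]
  rw [mul_div_mul_comm, hΓ, hsum, add_comm 1, add_right_comm, Real.Gamma_add_one hS.ne']
  congr 1
  have := hc.ne'
  have := Real.Gamma_pos_of_pos hS
  have : 0 < ∏ j, Real.Gamma (α j + p j) := prod_pos fun j _ => Real.Gamma_pos_of_pos (hαp j)
  field_simp

end Moments

theorem stmt_12_general (m : ℕ) (α : Fin (m + 1) → ℝ) (hα : ∀ i, 0 < α i)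
    (n : ℕ) (a : (Fin (m + 1) → ℕ) → ℝ) (ha : ∀ k, 0 ≤ a k)
    (P : (Fin (m + 1) → ℝ) → ℝ)
    (hP : ∀ t, P t = ∑ k ∈ (Fintype.piFinset fun _ : Fin (m + 1) => range (n + 1)).filter
        (fun k => ∑ i, k i = n), a k * ∏ i, t i ^ k i)
    (Q : (Fin (m + 1) → ℝ) → ℝ)
    (hQ : ∀ y, Q y = ∑ k ∈ (Fintype.piFinset fun _ : Fin (m + 1) => range (n + 1)).filter
        (fun k => ∑ i, k i = n), a k * ∏ i, ∏ r ∈ range (k i), (y i + r))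
    (c : ℝ) (hc : 0 < c)
    (μ : Measure (Fin (m + 1) → ℝ))
    (hμ : μ = Measure.map (fun y : Fin m → ℝ => Fin.snoc y (1 - ∑ i, y i))
      ((volume : Measure (Fin m → ℝ)).withDensity fun y =>
        ENNReal.ofReal
          (if (∀ i, 0 < y i) ∧ ∑ i, y i < 1 then
            c * (∏ i : Fin (m + 1), (Fin.snoc y (1 - ∑ j, y j) i) ^ (α i - 1)) *
              P (Fin.snoc y (1 - ∑ j, y j))
          else 0))) :
    ∀ (p : Fin (m + 1) → ℕ) (i : Fin (m + 1)),
      (∫ x, x i * ∏ j, x j ^ p j ∂μ) / (∫ x, ∏ j, x j ^ p j ∂μ) =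
        ((α i + p i) / ((∑ j, (α j + p j)) + n)) *
          (Q (Function.update (fun j => α j + p j) i (α i + p i + 1)) /
            Q (fun j => α j + p j)) := by
  intro p i
  obtain rfl : P = _ := funext hP
  obtain rfl : Q = _ := funext hQ
  change μ = simplexMeasure (dirichletMixtureDensity c α _ a) at hμ
  subst hμ
  exact integral_mul_div_integral_simplexMeasure hα (fun k hk => (mem_filter.1 hk).2) ha hc p i

/-- Let `α ∈ (0,∞)^d`, let `P(t) = ∑_{|k|=n} a_k t^k` be a homogeneous
polynomial of degree `n` with nonnegative coefficients (not all zero), and let `μ` be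
the probability measure on the simplex `T_d` with density proportional to
`(∏ tᵢ^{αᵢ-1}) P(t)` (realized via `y ↦ (y, 1-∑y)` from Lebesgue measure on the open
standard simplex of `ℝ^{d-1}`).  With `Q(y) = ∑_{|k|=n} a_k ∏ᵢ (yᵢ)_{kᵢ}` (rising
factorials), the reinforcement law `V i p = E_μ[Xᵢ X^p]/E_μ[X^p]` equals
`((αᵢ+pᵢ)/((∑ⱼ αⱼ+pⱼ)+n)) · Q(α+p+eᵢ)/Q(α+p)`. -/
theorem stmt_12 (m : ℕ) (α : Fin (m + 1) → ℝ) (hα : ∀ i, 0 < α i)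
    (n : ℕ) (a : (Fin (m + 1) → ℕ) → ℝ) (ha : ∀ k, 0 ≤ a k)
    (hne : ∃ k ∈ (Fintype.piFinset fun _ : Fin (m + 1) => range (n + 1)).filter
        (fun k => ∑ i, k i = n), a k ≠ 0)
    (P : (Fin (m + 1) → ℝ) → ℝ)
    (hP : ∀ t, P t = ∑ k ∈ (Fintype.piFinset fun _ : Fin (m + 1) => range (n + 1)).filter
        (fun k => ∑ i, k i = n), a k * ∏ i, t i ^ k i)
    (Q : (Fin (m + 1) → ℝ) → ℝ)
    (hQ : ∀ y, Q y = ∑ k ∈ (Fintype.piFinset fun _ : Fin (m + 1) => range (n + 1)).filter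
        (fun k => ∑ i, k i = n), a k * ∏ i, ∏ r ∈ range (k i), (y i + r))
    (c : ℝ) (hc : 0 < c)
    (μ : Measure (Fin (m + 1) → ℝ)) (hprob : IsProbabilityMeasure μ)
    (hμ : μ = Measure.map (fun y : Fin m → ℝ => Fin.snoc y (1 - ∑ i, y i))
      ((volume : Measure (Fin m → ℝ)).withDensity fun y =>
        ENNReal.ofReal
          (if (∀ i, 0 < y i) ∧ ∑ i, y i < 1 then
            c * (∏ i : Fin (m + 1), (Fin.snoc y (1 - ∑ j, y j) i) ^ (α i - 1)) *
              P (Fin.snoc y (1 - ∑ j, y j))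
          else 0))) :
    ∀ (p : Fin (m + 1) → ℕ) (i : Fin (m + 1)),
      (∫ x, x i * ∏ j, x j ^ p j ∂μ) / (∫ x, ∏ j, x j ^ p j ∂μ) =
        ((α i + p i) / ((∑ j, (α j + p j)) + n)) *
          (Q (Function.update (fun j => α j + p j) i (α i + p i + 1)) /
            Q (fun j => α j + p j)) :=
  stmt_12_general m α hα n a ha P hP Q hQ c hc μ hμ
end

section
/- Let G be a countable locally finite graph with an independent random environment μ = ⊗_x μ_x, where μ_x is a probability measure on T_{d(x)}. Then the annealed law P_{x_0} of the random walk in this environment satisfies: for any trajectory history, P_{x_0}(X_{n+1} = e(x,i) | X_n = x, past) = E_{μ_x}[ω(x,i) ∏_j ω(x,j)^{N_j(x)}] / E_{μ_x}[∏_j ω(x,j)^{N_j(x)}], where N_j(x) is the number of previous traversals of the oriented edge (x, e(x,j)). In particular, the annealed law coincides with the law of the edge-oriented reinforced random walk with reinforcement V_i(x,p) = E_{μ_x}[ω(x,i) ω(x)^p]/E_{μ_x}[ω(x)^p]. -/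
/-!
With `x = v n`, the weight of the first `n` steps splits as `G ω * F (ω x)`: `F ρ = ∏ⱼ ρ j ^ Nⱼ`
collects the steps taken from `x`, and `G` the steps taken from the other sites. `G` is
measurable with respect to the coordinates `ω y`, `y ≠ x`, so by independence it is independent
of `ω x`. Hence the annealed weights of the first `n` and `n + 1` steps both factor as `∫ G`
times an integral against `μx x`, and `∫ G > 0` (the transition probabilities are positive)
cancels in the ratio.
-/

open MeasureTheory Finset ProbabilityTheory
open scoped Classical

theorem Finset.prod_comp_eq_prod_pow_card {α γ M : Type*} [CommMonoid M] [DecidableEq γ]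
    {s : Finset α} {t : Finset γ} {g : α → γ} (h : ∀ a ∈ s, g a ∈ t) (f : γ → M) :
    ∏ a ∈ s, f (g a) = ∏ b ∈ t, f b ^ #{a ∈ s | g a = b} := by
  simp only [← prod_fiberwise_of_maps_to' h f, prod_const]

theorem prod_path_eq_mul_prod_pow_visits {ι κ M : Type*} [CommMonoid M] [DecidableEq ι]
    [DecidableEq κ] (ω : ι → κ → M) (v : ℕ → ι) (s : ℕ → κ) (n : ℕ) (x : ι) {t : Finset κ}
    (hs : ∀ l < n, v l = x → s l ∈ t) :
    ∏ l ∈ range n, ω (v l) (s l) =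
      (∏ l ∈ range n with v l ≠ x, ω (v l) (s l)) *
        ∏ j ∈ t, ω x j ^ #{l ∈ range n | v l = x ∧ s l = j} := by
  have hx : ∏ l ∈ range n with v l = x, ω (v l) (s l) = ∏ l ∈ range n with v l = x, ω x (s l) :=
    prod_congr rfl fun l hl => by rw [(mem_filter.1 hl).2]
  have hmaps (l) (hl : l ∈ {l ∈ range n | v l = x}) : s l ∈ t :=
    hs l (mem_range.1 (mem_filter.1 hl).1) (mem_filter.1 hl).2
  rw [← prod_filter_not_mul_prod_filter (range n) (fun l => v l = x), hx,
    prod_comp_eq_prod_pow_card hmaps]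
  simp only [filter_filter]

namespace MeasurableSpace

variable {ι β : Type*} [MeasurableSpace β]

abbrev coordsExcept (x : ι) : MeasurableSpace (ι → β) :=
  ⨆ (y) (_ : y ≠ x), MeasurableSpace.comap (fun ω : ι → β => ω y) ‹_›

theorem coordsExcept_le (x : ι) : coordsExcept (β := β) x ≤ MeasurableSpace.pi :=
  iSup₂_le fun y _ => (measurable_pi_apply y).comap_le

theorem measurable_coordsExcept_apply {x y : ι} (hy : y ≠ x) :
    Measurable[coordsExcept x] fun ω : ι → β => ω y :=
  Measurable.of_comap_le (le_iSup₂ (f := fun y (_ : y ≠ x) =>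
    MeasurableSpace.comap (fun ω : ι → β => ω y) ‹_›) y hy)

end MeasurableSpace

open MeasurableSpace

theorem measurable_coordsExcept_prod {ι κ α : Type*} {x : ι} (t : Finset α) (v : α → ι)
    (s : α → κ) (hv : ∀ l ∈ t, v l ≠ x) :
    Measurable[coordsExcept x] fun ω : ι → κ → ℝ => ∏ l ∈ t, ω (v l) (s l) :=
  Finset.measurable_prod t fun l hl =>
    (measurable_pi_apply (s l)).comp (measurable_coordsExcept_apply (hv l hl))

namespace ProbabilityTheory

variable {ι β : Type*} [MeasurableSpace β] {μ : Measure (ι → β)}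

theorem iIndepFun.indepFun_coordsExcept (h : iIndepFun (fun i (ω : ι → β) => ω i) μ) {x : ι}
    {G : (ι → β) → ℝ} (hG : Measurable[coordsExcept x] G) :
    IndepFun G (fun ω => ω x) μ := by
  have h_indep := indep_iSup_of_disjoint (fun i => (measurable_pi_apply i).comap_le) h
    (S := {y | y ≠ x}) (T := {x}) (by simp)
  simp only [Set.mem_ofPred_eq, Set.mem_singleton_iff, iSup_iSup_eq_left] at h_indep
  exact indep_of_indep_of_le_left h_indep hG.comap_le

theorem iIndepFun.integral_mul_comp_eval (h : iIndepFun (fun i (ω : ι → β) => ω i) μ) {x : ι}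
    {G : (ι → β) → ℝ} (hG : Measurable[coordsExcept x] G) {g : β → ℝ} (hg : Measurable g) :
    ∫ ω, G ω * g (ω x) ∂μ = (∫ ω, G ω ∂μ) * ∫ ρ, g ρ ∂(μ.map fun ω => ω x) := by
  rw [integral_map (measurable_pi_apply x).aemeasurable hg.aestronglyMeasurable]
  exact ((h.indepFun_coordsExcept hG).comp measurable_id hg).integral_mul_eq_mul_integral
    (hG.mono (coordsExcept_le x) le_rfl).aestronglyMeasurable
    (hg.comp (measurable_pi_apply x)).aestronglyMeasurable

end ProbabilityTheory

theorem MeasureTheory.integral_pos_of_ae_pos {α : Type*} [MeasurableSpace α] {μ : Measure α}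
    [NeZero μ] {f : α → ℝ} (hfi : Integrable f μ) (hf : ∀ᵐ a ∂μ, 0 < f a) :
    0 < ∫ a, f a ∂μ := by
  rw [integral_pos_iff_support_of_nonneg_ae (hf.mono fun _ h => h.le) hfi]
  refine pos_iff_ne_zero.2 fun h0 => NeZero.ne μ (ae_eq_bot.1 ?_)
  have hzero : ∀ᵐ a ∂μ, f a = 0 := by
    rw [ae_iff]; simpa [Function.support] using h0
  exact Filter.eventually_false_iff_eq_bot.1 ((hf.and hzero).mono fun _ h => h.1.ne' h.2)

theorem stmt_13_general (Vtx : Type*)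
    (d : Vtx → ℕ)
    (μ : Measure (Vtx → ℕ → ℝ)) [IsProbabilityMeasure μ]
    (hindep : ProbabilityTheory.iIndepFun
      (fun x (ω : Vtx → ℕ → ℝ) => ω x) μ)
    (μx : Vtx → Measure (ℕ → ℝ))
    (hμx : ∀ x, μx x = μ.map (fun ω => ω x))
    (hsupp : ∀ᵐ ω ∂μ, ∀ x, (∀ j < d x, 0 < ω x j ∧ ω x j ≤ 1) ∧
      ∑ j ∈ range (d x), ω x j = 1)
    (v : ℕ → Vtx) (s : ℕ → ℕ)
    (hs : ∀ l, s l < d (v l)) :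
    ∀ n : ℕ,
      (∫ ω, ∏ l ∈ range (n + 1), ω (v l) (s l) ∂μ) /
        (∫ ω, ∏ l ∈ range n, ω (v l) (s l) ∂μ) =
      (∫ ρ, ρ (s n) * ∏ j ∈ range (d (v n)),
          ρ j ^ ((range n).filter (fun l => v l = v n ∧ s l = j)).card ∂(μx (v n))) /
        (∫ ρ, ∏ j ∈ range (d (v n)),
          ρ j ^ ((range n).filter (fun l => v l = v n ∧ s l = j)).card ∂(μx (v n))) := by
  intro n
  set x := v n
  set G : (Vtx → ℕ → ℝ) → ℝ := fun ω => ∏ l ∈ range n with v l ≠ x, ω (v l) (s l)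
  set F : (ℕ → ℝ) → ℝ := fun ρ => ∏ j ∈ range (d x), ρ j ^ #{l ∈ range n | v l = x ∧ s l = j}
  have hpath (ω : Vtx → ℕ → ℝ) : ∏ l ∈ range n, ω (v l) (s l) = G ω * F (ω x) :=
    prod_path_eq_mul_prod_pow_visits ω v s n x fun l _ hl => mem_range.2 (hl ▸ hs l)
  have hG : Measurable[coordsExcept x] G :=
    measurable_coordsExcept_prod _ v s fun l hl => (mem_filter.1 hl).2
  have hF : Measurable F := by fun_prop
  have hGpos : 0 < ∫ ω, G ω ∂μ := by
    have hbounds : ∀ᵐ ω ∂μ, 0 < G ω ∧ G ω ≤ 1 := by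
      filter_upwards [hsupp] with ω hω
      have h l : 0 < ω (v l) (s l) ∧ ω (v l) (s l) ≤ 1 := (hω (v l)).1 (s l) (hs l)
      exact ⟨prod_pos fun l _ => (h l).1, prod_le_one (fun l _ => (h l).1.le) fun l _ => (h l).2⟩
    have hint : Integrable G μ :=
      .of_bound (hG.mono (coordsExcept_le x) le_rfl).aestronglyMeasurable 1 (hbounds.mono fun _ h => by rw [Real.norm_eq_abs, abs_of_pos h.1]; exact h.2)
    exact integral_pos_of_ae_pos hint (hbounds.mono fun _ h => h.1)
  have hstep : ∫ ω, ∏ l ∈ range (n + 1), ω (v l) (s l) ∂μ =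
      ∫ ω, G ω * (ω x (s n) * F (ω x)) ∂μ := by
    congr 1; ext ω; rw [prod_range_succ, hpath]; ring
  rw [hstep, funext hpath, hindep.integral_mul_comp_eval hG hF,
    hindep.integral_mul_comp_eval (g := fun ρ => ρ (s n) * F ρ) hG
      ((measurable_pi_apply _).mul hF), hμx]
  exact mul_div_mul_left _ _ hGpos.ne'

/-- Let `G` be a countable locally finite graph with vertex set `Vtx`,
where vertex `x` has `d x` neighbours `e x 0, …, e x (d x - 1)`.  Let `μ` be the law of
an environment `ω : Vtx → ℕ → ℝ` in which the variables `(ω x)_{x}` are independent, the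
marginal at `x` is `μx x`, and a.s. `ω x ∈ T_{d x}`.  Consider a fixed trajectory
`v 0, v 1, …` with exits `s l < d (v l)`, `v (l+1) = e (v l) (s l)`.  Then the annealed
probability `A n = ∫ ∏_{l<n} ω (v l) (s l) dμ` of the path satisfies
`A (n+1) / A n = E_{μx x}[ρ (s n) ∏ⱼ ρ j ^ {Nⱼ}] / E_{μx x}[∏ⱼ ρ j ^ {Nⱼ}]` with
`x = v n` and `Nⱼ` the number of previous traversals of the oriented edge `(x, e x j)`;
i.e. the annealed law is the edge-oriented reinforced walk with reinforcement
`V i (x, p) = E_{μx x}[ω(x,i) ω(x)^p] / E_{μx x}[ω(x)^p]`. -/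
theorem stmt_13 (Vtx : Type*) [Countable Vtx] [MeasurableSpace Vtx]
    (d : Vtx → ℕ) (hd : ∀ x, 0 < d x) (e : Vtx → ℕ → Vtx)
    (μ : Measure (Vtx → ℕ → ℝ)) [IsProbabilityMeasure μ]
    (hindep : ProbabilityTheory.iIndepFun
      (fun x (ω : Vtx → ℕ → ℝ) => ω x) μ)
    (μx : Vtx → Measure (ℕ → ℝ))
    (hμx : ∀ x, μx x = μ.map (fun ω => ω x))
    (hsupp : ∀ᵐ ω ∂μ, ∀ x, (∀ j < d x, 0 < ω x j ∧ ω x j ≤ 1) ∧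
      ∑ j ∈ range (d x), ω x j = 1)
    (v : ℕ → Vtx) (s : ℕ → ℕ)
    (hs : ∀ l, s l < d (v l)) (hv : ∀ l, v (l + 1) = e (v l) (s l)) :
    ∀ n : ℕ,
      (∫ ω, ∏ l ∈ range (n + 1), ω (v l) (s l) ∂μ) /
        (∫ ω, ∏ l ∈ range n, ω (v l) (s l) ∂μ) =
      (∫ ρ, ρ (s n) * ∏ j ∈ range (d (v n)),
          ρ j ^ ((range n).filter (fun l => v l = v n ∧ s l = j)).card ∂(μx (v n))) /
        (∫ ρ, ∏ j ∈ range (d (v n)),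
          ρ j ^ ((range n).filter (fun l => v l = v n ∧ s l = j)).card ∂(μx (v n))) :=
  stmt_13_general Vtx d μ hindep μx hμx hsupp v s hs
end
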